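/- arXiv:1508.06418 — 2 statements merged into one kernel-verified Lean document; each statement's English description precedes it below -/
import Mathlib

section
/- Let R be an algebraic curvature tensor on an n-dimensional inner product space with all sectional curvatures nonnegative, and let φ be a positive semidefinite symmetric bilinear form with orthonormal eigenbasis {e_i} and eigenvalues λ_i ≥ 0. Then Σ_{i,j} (Ric(e_i,e_i) λ_i^2 − R(e_i,e_j,e_j,e_i) λ_i λ_j) ≥ 0. -/
open scoped RealInnerProductSpace

/-!
Writing `s i k = R(eᵢ, eₖ, eₖ, eᵢ)`, the pair symmetry of `R` makes `s` a symmetric matrix, and the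
expression is the quadratic form of its Laplacian evaluated at `λ`, i.e.
`½ ∑ᵢₖ s i k (λᵢ - λₖ)²`. Off the diagonal `s i k` is a sectional curvature, hence nonnegative,
and on the diagonal the factor `(λᵢ - λᵢ)²` vanishes.
-/

open Finset

section LaplacianForm

variable {ι : Type*} [Fintype ι] {s : ι → ι → ℝ}

theorem laplacian_form_eq_half_sum_sq (hs : ∀ i j, s i j = s j i) (x : ι → ℝ) :
    ∑ i, (∑ j, s i j) * x i ^ 2 - ∑ i, ∑ j, s i j * (x i * x j)
      = (∑ i, ∑ j, s i j * (x i - x j) ^ 2) / 2 := by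
  have hswap : ∑ i, ∑ j, s i j * x j ^ 2 = ∑ i, ∑ j, s i j * x i ^ 2 := by
    rw [sum_comm]
    simp_rw [hs]
  have hexpand : ∑ i, ∑ j, s i j * (x i - x j) ^ 2
      = ∑ i, ∑ j, s i j * x i ^ 2 + ∑ i, ∑ j, s i j * x j ^ 2
        - 2 * ∑ i, ∑ j, s i j * (x i * x j) := by
    simp_rw [mul_sum, ← sum_add_distrib, ← sum_sub_distrib]
    exact sum_congr rfl fun i _ => sum_congr rfl fun j _ => by ring
  simp_rw [hexpand, hswap, sum_mul]
  ring

theorem laplacian_form_nonneg (hs : ∀ i j, s i j = s j i) (hpos : ∀ i j, i ≠ j → 0 ≤ s i j)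
    (x : ι → ℝ) :
    0 ≤ ∑ i, (∑ j, s i j) * x i ^ 2 - ∑ i, ∑ j, s i j * (x i * x j) := by
  rw [laplacian_form_eq_half_sum_sq hs]
  refine div_nonneg (sum_nonneg fun i _ => sum_nonneg fun j _ => ?_) zero_le_two
  obtain rfl | hij := eq_or_ne i j
  · simp
  · exact mul_nonneg (hpos i j hij) (sq_nonneg _)

end LaplacianForm

theorem stmt2_general {V : Type*} [NormedAddCommGroup V] [InnerProductSpace ℝ V]
    {n : ℕ}
    (R : V →ₗ[ℝ] V →ₗ[ℝ] V →ₗ[ℝ] V →ₗ[ℝ] ℝ)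
    (hR3 : ∀ x y z w : V, R x y z w = R z w x y)
    (hsec : ∀ u v : V, ‖u‖ = 1 → ‖v‖ = 1 → ⟪u, v⟫ = 0 → 0 ≤ R u v v u)
    (e : OrthonormalBasis (Fin n) ℝ V)
    (lam : Fin n → ℝ) :
    0 ≤ (∑ i, (∑ k, R (e i) (e k) (e k) (e i)) * lam i ^ 2)
      - (∑ i, ∑ j, R (e i) (e j) (e j) (e i) * (lam i * lam j)) :=
  laplacian_form_nonneg (s := fun i k => R (e i) (e k) (e k) (e i))
    (fun i k => hR3 (e i) (e k) (e k) (e i))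
    (fun i k hik => hsec (e i) (e k) (e.orthonormal.1 i) (e.orthonormal.1 k) (e.orthonormal.2 hik))
    lam

/-- for an algebraic curvature tensor `R` with nonnegative sectional
curvature and a positive semidefinite symmetric bilinear form `φ` with orthonormal
eigenbasis `e` and eigenvalues `λᵢ ≥ 0`, one has
`∑ᵢ Ric(eᵢ,eᵢ) λᵢ² − ∑ᵢⱼ R(eᵢ,eⱼ,eⱼ,eᵢ) λᵢ λⱼ ≥ 0`. -/
theorem stmt2 {V : Type*} [NormedAddCommGroup V] [InnerProductSpace ℝ V]
    [FiniteDimensional ℝ V] {n : ℕ}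
    (R : V →ₗ[ℝ] V →ₗ[ℝ] V →ₗ[ℝ] V →ₗ[ℝ] ℝ)
    (hR1 : ∀ x y z w : V, R x y z w = - R y x z w)
    (hR2 : ∀ x y z w : V, R x y z w = - R x y w z)
    (hR3 : ∀ x y z w : V, R x y z w = R z w x y)
    (hB : ∀ x y z w : V, R x y z w + R y z x w + R z x y w = 0)
    (hsec : ∀ u v : V, ‖u‖ = 1 → ‖v‖ = 1 → ⟪u, v⟫ = 0 → 0 ≤ R u v v u)
    (e : OrthonormalBasis (Fin n) ℝ V)
    (φ : LinearMap.BilinForm ℝ V) (hφsymm : ∀ x y, φ x y = φ y x)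
    (hφpsd : ∀ x, 0 ≤ φ x x)
    (lam : Fin n → ℝ) (hlam : ∀ i, 0 ≤ lam i)
    (hdiag : ∀ i j, φ (e i) (e j) = if i = j then lam i else 0) :
    0 ≤ (∑ i, (∑ k, R (e i) (e k) (e k) (e i)) * lam i ^ 2)
      - (∑ i, ∑ j, R (e i) (e j) (e j) (e i) * (lam i * lam j)) :=
  stmt2_general R hR3 hsec e lam
end

section
/- Let R be an algebraic curvature tensor on a 3-dimensional inner product space with all sectional curvatures nonnegative. Then Ric(X,X) ≤ (s/2)·|X|^2 for every vector X. -/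
/-!
Ricci and scalar curvature are traces of bilinear forms, hence independent of the orthonormal
basis. For a unit vector `X`, compute in an orthonormal basis `e₀ = X, e₁, e₂`: with
`Kᵢⱼ = R(eᵢ, eⱼ, eⱼ, eᵢ)` one gets `Ric(X, X) = K₀₁ + K₀₂` and `s = 2 (K₀₁ + K₀₂ + K₁₂)`,
so `s / 2 - Ric(X, X) = K₁₂ ≥ 0`.
-/

open scoped RealInnerProductSpace

section Curvature

variable {V : Type*} [NormedAddCommGroup V] [InnerProductSpace ℝ V]
  {ι κ : Type*} [Fintype ι] [Fintype κ]

theorem LinearMap.sum_apply_self_eq_of_orthonormalBasis [FiniteDimensional ℝ V]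
    (B : V →ₗ[ℝ] V →ₗ[ℝ] ℝ) (b : OrthonormalBasis ι ℝ V) (b' : OrthonormalBasis κ ℝ V) :
    ∑ i, B (b i) (b i) = ∑ j, B (b' j) (b' j) := by
  let T := InnerProductSpace.continuousLinearMapOfBilin B.toContinuousBilinearMap
  have hT : ∀ v, B v v = ⟪v, T v⟫ := fun v => by
    rw [real_inner_comm, InnerProductSpace.continuousLinearMapOfBilin_apply]; rfl
  simp only [hT]
  exact ((T : V →ₗ[ℝ] V).trace_eq_sum_inner b).symm.trans
    ((T : V →ₗ[ℝ] V).trace_eq_sum_inner b')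

theorem OrthonormalBasis.exists_apply_eq [FiniteDimensional ℝ V] (b : OrthonormalBasis ι ℝ V)
    (i : ι) {y : V} (hy : ‖y‖ = 1) : ∃ b' : OrthonormalBasis ι ℝ V, b' i = y := by
  have hy' : Orthonormal ℝ (({i} : Set ι).domRestrict fun _ => y) :=
    ⟨fun _ => hy, fun j k hjk => absurd (Subsingleton.elim j k) hjk⟩
  obtain ⟨b', hb'⟩ := hy'.exists_orthonormalBasis_extension_of_card_eq
    (Module.finrank_eq_card_basis b.toBasis)
  exact ⟨b', hb' i rfl⟩

variable (R : V →ₗ[ℝ] V →ₗ[ℝ] V →ₗ[ℝ] V →ₗ[ℝ] ℝ)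

noncomputable def ricci (b : OrthonormalBasis ι ℝ V) (x : V) : ℝ := ∑ k, R x (b k) (b k) x

noncomputable def scalarCurvature (b : OrthonormalBasis ι ℝ V) : ℝ := ∑ i, ricci R b (b i)

theorem ricci_smul (b : OrthonormalBasis ι ℝ V) (c : ℝ) (x : V) :
    ricci R b (c • x) = c ^ 2 * ricci R b x := by
  simp only [ricci, map_smul, LinearMap.smul_apply, smul_eq_mul, Finset.mul_sum]
  exact Finset.sum_congr rfl fun _ _ => by ring

theorem ricci_eq_of_orthonormalBasis [FiniteDimensional ℝ V] (b : OrthonormalBasis ι ℝ V)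
    (b' : OrthonormalBasis κ ℝ V) (x : V) : ricci R b x = ricci R b' x :=
  ((R x).compr₂ (LinearMap.applyₗ x)).sum_apply_self_eq_of_orthonormalBasis b b'

theorem scalarCurvature_eq_of_orthonormalBasis [FiniteDimensional ℝ V]
    (b : OrthonormalBasis ι ℝ V) (b' : OrthonormalBasis κ ℝ V) :
    scalarCurvature R b = scalarCurvature R b' :=
  calc scalarCurvature R b
      = ∑ i, ∑ k, R (b i) (b' k) (b' k) (b i) :=
        Finset.sum_congr rfl fun i _ => ricci_eq_of_orthonormalBasis R b b' (b i)
    _ = ∑ k, ∑ i, R (b i) (b' k) (b' k) (b i) := Finset.sum_comm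
    _ = ∑ k, ∑ i, R (b' i) (b' k) (b' k) (b' i) := Finset.sum_congr rfl fun k _ =>
        ((R.flip (b' k)).flip (b' k)).sum_apply_self_eq_of_orthonormalBasis b b'
    _ = scalarCurvature R b' := Finset.sum_comm

variable {R}

theorem apply_self_left_eq_zero (hR1 : ∀ x y z w : V, R x y z w = - R y x z w) (x z w : V) :
    R x x z w = 0 := by
  linarith [hR1 x x z w]

theorem sectional_symm (hR1 : ∀ x y z w : V, R x y z w = - R y x z w)
    (hR2 : ∀ x y z w : V, R x y z w = - R x y w z) (x y : V) :
    R x y y x = R y x x y := by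
  rw [hR1, hR2, neg_neg]

theorem scalarCurvature_fin_three (hR1 : ∀ x y z w : V, R x y z w = - R y x z w)
    (hR2 : ∀ x y z w : V, R x y z w = - R x y w z) (g : OrthonormalBasis (Fin 3) ℝ V) :
    scalarCurvature R g = 2 * (ricci R g (g 0) + R (g 1) (g 2) (g 2) (g 1)) := by
  simp only [scalarCurvature, ricci, Fin.sum_univ_three, apply_self_left_eq_zero hR1,
    sectional_symm hR1 hR2 (g 1) (g 0), sectional_symm hR1 hR2 (g 2) (g 0),
    sectional_symm hR1 hR2 (g 2) (g 1)]
  ring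

theorem ricci_le_half_scalarCurvature [FiniteDimensional ℝ V]
    (hR1 : ∀ x y z w : V, R x y z w = - R y x z w)
    (hR2 : ∀ x y z w : V, R x y z w = - R x y w z)
    (hsec : ∀ u v : V, ‖u‖ = 1 → ‖v‖ = 1 → ⟪u, v⟫ = 0 → 0 ≤ R u v v u)
    (b : OrthonormalBasis (Fin 3) ℝ V) {x : V} (hx : ‖x‖ = 1) :
    ricci R b x ≤ scalarCurvature R b / 2 := by
  obtain ⟨g, rfl⟩ := b.exists_apply_eq 0 hx
  rw [ricci_eq_of_orthonormalBasis R b g, scalarCurvature_eq_of_orthonormalBasis R b g,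
    scalarCurvature_fin_three hR1 hR2]
  have hK₁₂ := hsec (g 1) (g 2) (g.orthonormal.1 1) (g.orthonormal.1 2)
    (g.orthonormal.2 (by decide))
  linarith

end Curvature

theorem stmt5_general {V : Type*} [NormedAddCommGroup V] [InnerProductSpace ℝ V]
    [FiniteDimensional ℝ V]
    (R : V →ₗ[ℝ] V →ₗ[ℝ] V →ₗ[ℝ] V →ₗ[ℝ] ℝ)
    (hR1 : ∀ x y z w : V, R x y z w = - R y x z w)
    (hR2 : ∀ x y z w : V, R x y z w = - R x y w z)
    (f : OrthonormalBasis (Fin 3) ℝ V)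
    (hsec : ∀ u v : V, ‖u‖ = 1 → ‖v‖ = 1 → ⟪u, v⟫ = 0 → 0 ≤ R u v v u) :
    ∀ X : V, (∑ k, R X (f k) (f k) X)
        ≤ (∑ i, ∑ k, R (f i) (f k) (f k) (f i)) / 2 * ‖X‖ ^ 2 := by
  intro X
  rcases eq_or_ne X 0 with rfl | hX
  · simp
  change ricci R f X ≤ scalarCurvature R f / 2 * ‖X‖ ^ 2
  calc ricci R f X = ‖X‖ ^ 2 * ricci R f (‖X‖⁻¹ • X) := by
        rw [← ricci_smul, smul_inv_smul₀ (norm_ne_zero_iff.2 hX)]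
    _ ≤ ‖X‖ ^ 2 * (scalarCurvature R f / 2) := mul_le_mul_of_nonneg_left
        (ricci_le_half_scalarCurvature hR1 hR2 hsec f (norm_smul_inv_norm hX)) (sq_nonneg _)
    _ = scalarCurvature R f / 2 * ‖X‖ ^ 2 := mul_comm _ _

/-- on a 3-dimensional inner product space, if all sectional curvatures of
the algebraic curvature tensor `R` are nonnegative, then `Ric(X,X) ≤ (s/2)·‖X‖²` for
every `X`, where `Ric(x,y) = ∑ₖ R(x,fₖ,fₖ,y)` and `s` is the scalar curvature. -/
theorem stmt5 {V : Type*} [NormedAddCommGroup V] [InnerProductSpace ℝ V]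
    [FiniteDimensional ℝ V]
    (R : V →ₗ[ℝ] V →ₗ[ℝ] V →ₗ[ℝ] V →ₗ[ℝ] ℝ)
    (hR1 : ∀ x y z w : V, R x y z w = - R y x z w)
    (hR2 : ∀ x y z w : V, R x y z w = - R x y w z)
    (hR3 : ∀ x y z w : V, R x y z w = R z w x y)
    (hB : ∀ x y z w : V, R x y z w + R y z x w + R z x y w = 0)
    (f : OrthonormalBasis (Fin 3) ℝ V)
    (hsec : ∀ u v : V, ‖u‖ = 1 → ‖v‖ = 1 → ⟪u, v⟫ = 0 → 0 ≤ R u v v u) :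
    ∀ X : V, (∑ k, R X (f k) (f k) X)
        ≤ (∑ i, ∑ k, R (f i) (f k) (f k) (f i)) / 2 * ‖X‖ ^ 2 :=
  stmt5_general R hR1 hR2 f hsec
end
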